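/- arXiv:2605.05451 — 2 statements merged into one kernel-verified Lean document; each statement's English description precedes it below -/
import Mathlib

section
/- Let {A_i}, {B_i}, {E_i}, {D_i} be sequences of nonnegative real numbers such that A_n² + Σ_{i=0}^n B_i² ≤ A_0² + Σ_{i=1}^n E_i A_i + Σ_{i=0}^n D_i holds for all n ≥ 0. Then for every n ≥ 0: A_n ≤ A_0 + Σ_{i=1}^n E_i + (Σ_{i=0}^n D_i)^{1/2}. -/
lemma quad_bound (x C Dv : ℝ) (hx : 0 ≤ x) (hC : 0 ≤ C) (hDv : 0 ≤ Dv)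
    (h : x ^ 2 ≤ C * x + Dv) : x ≤ C + Real.sqrt Dv := by
  nlinarith [Real.sq_sqrt hDv, Real.sqrt_nonneg Dv, sq_nonneg (x - C - Real.sqrt Dv),
    sq_nonneg (x - Real.sqrt Dv)]

theorem discrete_gronwall_first (A B E D : ℕ → ℝ)
    (hA : ∀ i, 0 ≤ A i) (hB : ∀ i, 0 ≤ B i) (hE : ∀ i, 0 ≤ E i) (hD : ∀ i, 0 ≤ D i)
    (h : ∀ n, A n ^ 2 + ∑ i ∈ Finset.range (n + 1), B i ^ 2 ≤
      A 0 ^ 2 + ∑ i ∈ Finset.Icc 1 n, E i * A i + ∑ i ∈ Finset.range (n + 1), D i) :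
    ∀ n, A n ≤ A 0 + ∑ i ∈ Finset.Icc 1 n, E i +
      Real.sqrt (∑ i ∈ Finset.range (n + 1), D i) := by
  intro n
  obtain ⟨m, hm, hmax⟩ := Finset.exists_max_image (Finset.range (n + 1)) A
    ⟨n, Finset.self_mem_range_succ n⟩
  simp only [Finset.mem_range] at hm
  have hmn : m ≤ n := Nat.lt_succ_iff.mp hm
  have hAn : A n ≤ A m := hmax n (Finset.self_mem_range_succ n)
  have hA0 : A 0 ≤ A m := hmax 0 (Finset.mem_range.mpr (Nat.succ_pos n))
  -- bound A m ^ 2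
  have hBsum : 0 ≤ ∑ i ∈ Finset.range (m + 1), B i ^ 2 :=
    Finset.sum_nonneg fun i _ => sq_nonneg _
  have hE1 : ∑ i ∈ Finset.Icc 1 m, E i * A i ≤ ∑ i ∈ Finset.Icc 1 n, E i * A i := by
    apply Finset.sum_le_sum_of_subset_of_nonneg
    · exact Finset.Icc_subset_Icc le_rfl hmn
    · intro i _ _; exact mul_nonneg (hE i) (hA i)
  have hD1 : ∑ i ∈ Finset.range (m + 1), D i ≤ ∑ i ∈ Finset.range (n + 1), D i := by
    apply Finset.sum_le_sum_of_subset_of_nonneg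
    · exact Finset.range_subset_range.mpr (Nat.succ_le_succ hmn)
    · intro i _ _; exact hD i
  have hE2 : ∑ i ∈ Finset.Icc 1 n, E i * A i ≤ (∑ i ∈ Finset.Icc 1 n, E i) * A m := by
    rw [Finset.sum_mul]
    apply Finset.sum_le_sum
    intro i hi
    rw [Finset.mem_Icc] at hi
    exact mul_le_mul_of_nonneg_left
      (hmax i (Finset.mem_range.mpr (Nat.lt_succ_of_le hi.2))) (hE i)
  have key : A m ^ 2 ≤ (A 0 + ∑ i ∈ Finset.Icc 1 n, E i) * A m +
      ∑ i ∈ Finset.range (n + 1), D i := by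
    have := h m
    nlinarith [hA 0]
  have hC : 0 ≤ A 0 + ∑ i ∈ Finset.Icc 1 n, E i :=
    add_nonneg (hA 0) (Finset.sum_nonneg fun i _ => hE i)
  have hDn : 0 ≤ ∑ i ∈ Finset.range (n + 1), D i :=
    Finset.sum_nonneg fun i _ => hD i
  have := quad_bound (A m) _ _ (hA m) hC hDn key
  linarith
end

section
/- Let {A_i}, {B_i}, {E_i}, {D_i} be sequences of nonnegative real numbers such that A_n² + Σ_{i=0}^n B_i² ≤ A_0² + Σ_{i=1}^n E_i A_i + Σ_{i=0}^n D_i holds for all n ≥ 0. Then there exists a constant C > 0 independent of n such that for every n ≥ 0: (Σ_{i=0}^n B_i²)^{1/2} ≤ C (A_0 + Σ_{i=1}^n E_i + (Σ_{i=0}^n D_i)^{1/2}). -/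
theorem discrete_gronwall_second (A B E D : ℕ → ℝ)
    (hA : ∀ i, 0 ≤ A i) (hB : ∀ i, 0 ≤ B i) (hE : ∀ i, 0 ≤ E i) (hD : ∀ i, 0 ≤ D i)
    (h : ∀ n, A n ^ 2 + ∑ i ∈ Finset.range (n + 1), B i ^ 2 ≤
      A 0 ^ 2 + ∑ i ∈ Finset.Icc 1 n, E i * A i + ∑ i ∈ Finset.range (n + 1), D i) :
    ∃ C > (0:ℝ), ∀ n, Real.sqrt (∑ i ∈ Finset.range (n + 1), B i ^ 2) ≤
      C * (A 0 + ∑ i ∈ Finset.Icc 1 n, E i +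
        Real.sqrt (∑ i ∈ Finset.range (n + 1), D i)) := by
  refine ⟨1, one_pos, fun n => ?_⟩
  obtain ⟨m, hm, hmax⟩ := Finset.exists_max_image (Finset.range (n + 1)) A
    ⟨0, Finset.mem_range.mpr (Nat.succ_pos n)⟩
  have hmn : m ≤ n := Nat.lt_succ_iff.mp (Finset.mem_range.mp hm)
  set T := ∑ i ∈ Finset.Icc 1 n, E i with hT
  set SD := ∑ i ∈ Finset.range (n + 1), D i with hSD
  have hT0 : 0 ≤ T := Finset.sum_nonneg fun i _ => hE i
  have hSD0 : 0 ≤ SD := Finset.sum_nonneg fun i _ => hD i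
  have hM0 : 0 ≤ A m := hA m
  set b := Real.sqrt (A 0 ^ 2 + SD) with hb
  have hb0 : 0 ≤ b := Real.sqrt_nonneg _
  have hbsq : b ^ 2 = A 0 ^ 2 + SD := Real.sq_sqrt (by positivity)
  have hEA : ∀ k ≤ n, ∑ i ∈ Finset.Icc 1 k, E i * A i ≤ T * A m := by
    intro k hk
    calc ∑ i ∈ Finset.Icc 1 k, E i * A i
        ≤ ∑ i ∈ Finset.Icc 1 k, E i * A m := by
          apply Finset.sum_le_sum
          intro i hi
          have hi' : i ≤ n := le_trans (Finset.mem_Icc.mp hi).2 hk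
          exact mul_le_mul_of_nonneg_left
            (hmax i (Finset.mem_range.mpr (Nat.lt_succ_of_le hi'))) (hE i)
      _ ≤ T * A m := by
          rw [← Finset.sum_mul]
          exact mul_le_mul_of_nonneg_right
            (Finset.sum_le_sum_of_subset_of_nonneg (Finset.Icc_subset_Icc_right hk)
              (fun i _ _ => hE i)) hM0
  have hDk : ∑ i ∈ Finset.range (m + 1), D i ≤ SD :=
    Finset.sum_le_sum_of_subset_of_nonneg (Finset.range_subset_range.mpr (by omega))
      (fun i _ _ => hD i)
  have hBm : 0 ≤ ∑ i ∈ Finset.range (m + 1), B i ^ 2 :=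
    Finset.sum_nonneg fun i _ => sq_nonneg _
  have hmsq : A m ^ 2 ≤ b ^ 2 + T * A m := by
    have h1 := h m
    have h2 := hEA m hmn
    nlinarith
  have hMle : A m ≤ b + T := by nlinarith [mul_nonneg hb0 hT0]
  have hAn : 0 ≤ A n ^ 2 := sq_nonneg _
  have hBn : ∑ i ∈ Finset.range (n + 1), B i ^ 2 ≤ (b + T) ^ 2 := by
    have h1 := h n
    have h2 := hEA n le_rfl
    nlinarith [mul_le_mul_of_nonneg_left hMle hT0, mul_nonneg hb0 hT0]
  have hsq : Real.sqrt (∑ i ∈ Finset.range (n + 1), B i ^ 2) ≤ b + T := by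
    calc Real.sqrt (∑ i ∈ Finset.range (n + 1), B i ^ 2)
        ≤ Real.sqrt ((b + T) ^ 2) := Real.sqrt_le_sqrt hBn
      _ = b + T := Real.sqrt_sq (by positivity)
  have hbA : b ≤ A 0 + Real.sqrt SD := by
    have hkey : A 0 ^ 2 + SD ≤ (A 0 + Real.sqrt SD) ^ 2 := by
      have h3 := Real.sq_sqrt hSD0
      nlinarith [mul_nonneg (hA 0) (Real.sqrt_nonneg SD)]
    calc b ≤ Real.sqrt ((A 0 + Real.sqrt SD) ^ 2) := Real.sqrt_le_sqrt hkey
      _ = _ := Real.sqrt_sq (add_nonneg (hA 0) (Real.sqrt_nonneg SD))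
  rw [one_mul]
  linarith
end
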